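/- Let f₁, f₂ ∈ C(Σ, M) satisfy f₁(0) ≠ f₂(∞), where 0 ∈ ℂ ⊂ Σ and ∞ is the point at infinity of Σ. Then there exist ε₁ > 0, ε₂ > 0 and R > 0 such that for every h ∈ C(Σ, M), every nonzero a ∈ ℂ, and every c ∈ ℂ, if d(h, f₁) ≤ ε₁ and d(h ∘ g_{a,c}, f₂) ≤ ε₂, then |c| ≤ R. (This is the boundedness claim for the translation parts of near-reparametrizations used in the proof of the main properness theorem for the affine group.) -/

import Mathlib

/-!
Since `g_{a,c}` sends `c` to `0`, the value `h 0` is within `ε₁` of `f₁ 0` and within `ε₂` of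
`f₂ c`. If `‖c‖` were large, continuity of `f₂` at `∞` would put `f₂ c` close to `f₂ ∞`, so with
`ε₁, ε₂` small compared with `dist (f₁ 0) (f₂ ∞) > 0` the triangle inequality fails.
-/

open OnePoint Filter Topology

/-- The reparametrization `g_{a,c} : Σ → Σ` of the Riemann sphere `Σ = OnePoint ℂ`
extending `z ↦ a · (z − c)` on `ℂ` and fixing the point at infinity. -/
noncomputable def gAff (a c : ℂ) (ha : a ≠ 0) : C(OnePoint ℂ, OnePoint ℂ) where
  toFun := OnePoint.map (fun z => a * (z - c))
  continuous_toFun :=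
    (Homeomorph.onePointCongr ((Homeomorph.subRight c).trans (Homeomorph.mulLeft₀ a ha))).continuous

theorem OnePoint.exists_forall_norm_ge_dist_lt {E Y : Type*} [SeminormedAddCommGroup E]
    [ProperSpace E] [PseudoMetricSpace Y] {f : OnePoint E → Y} (hf : ContinuousAt f ∞)
    {δ : ℝ} (hδ : 0 < δ) : ∃ R, ∀ z : E, R ≤ ‖z‖ → dist (f z) (f ∞) < δ := by
  have hcoe : Tendsto ((↑) : E → OnePoint E) (Bornology.cobounded E) (𝓝 ∞) := by
    rw [Metric.cobounded_eq_cocompact, ← coclosedCompact_eq_cocompact]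
    exact tendsto_coe_infty
  have hnear : ∀ᶠ z : E in Bornology.cobounded E, dist (f z) (f ∞) < δ :=
    (hf.tendsto.comp hcoe).eventually (Metric.ball_mem_nhds _ hδ)
  simpa using hasBasis_cobounded_norm.eventually_iff.mp hnear

theorem gAff_apply_coe_self (a c : ℂ) (ha : a ≠ 0) :
    gAff a c ha (c : OnePoint ℂ) = ((0 : ℂ) : OnePoint ℂ) := by
  show ((c : ℂ) : OnePoint ℂ).map (fun z => a * (z - c)) = _
  simp

theorem dist_apply_zero_apply_le_of_near_reparametrization {M : Type*} [PseudoMetricSpace M]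
    {f₁ f₂ h : C(OnePoint ℂ, M)} {a c : ℂ} (ha : a ≠ 0) {ε₁ ε₂ : ℝ} (h₁ : dist h f₁ ≤ ε₁)
    (h₂ : dist (h.comp (gAff a c ha)) f₂ ≤ ε₂) :
    dist (f₁ ((0 : ℂ) : OnePoint ℂ)) (f₂ c) ≤ ε₁ + ε₂ := by
  have e₁ := (ContinuousMap.dist_apply_le_dist (f := h) (g := f₁) ((0 : ℂ) : OnePoint ℂ)).trans h₁
  have e₂ := (ContinuousMap.dist_apply_le_dist (f := h.comp (gAff a c ha)) (g := f₂) c).trans h₂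
  rw [ContinuousMap.comp_apply, gAff_apply_coe_self] at e₂
  calc dist (f₁ ((0 : ℂ) : OnePoint ℂ)) (f₂ c)
      ≤ dist (f₁ ((0 : ℂ) : OnePoint ℂ)) (h ((0 : ℂ) : OnePoint ℂ))
        + dist (h ((0 : ℂ) : OnePoint ℂ)) (f₂ c) := dist_triangle _ _ _
    _ ≤ ε₁ + ε₂ := by rw [dist_comm]; exact add_le_add e₁ e₂

theorem near_reparametrization_translations_bounded_general {M : Type*} [MetricSpace M]
    (f₁ f₂ : C(OnePoint ℂ, M)) (hf : f₁ (((0 : ℂ) : OnePoint ℂ)) ≠ f₂ ∞) :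
    ∃ ε₁ > 0, ∃ ε₂ > 0, ∃ R > 0,
      ∀ (h : C(OnePoint ℂ, M)) (a c : ℂ) (ha : a ≠ 0),
        dist h f₁ ≤ ε₁ → dist (h.comp (gAff a c ha)) f₂ ≤ ε₂ → ‖c‖ ≤ R := by
  set D := dist (f₁ ((0 : ℂ) : OnePoint ℂ)) (f₂ ∞)
  have hD : 0 < D := dist_pos.mpr hf
  obtain ⟨R, hR⟩ := OnePoint.exists_forall_norm_ge_dist_lt f₂.continuous.continuousAt
    (half_pos hD)
  refine ⟨D / 4, by positivity, D / 4, by positivity, max R 1, by positivity,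
    fun h a c ha h₁ h₂ => ?_⟩
  by_contra! hc
  have hfar := hR c ((le_max_left R 1).trans hc.le)
  have hnear := dist_apply_zero_apply_le_of_near_reparametrization ha h₁ h₂
  have := dist_triangle (f₁ ((0 : ℂ) : OnePoint ℂ)) (f₂ c) (f₂ ∞)
  linarith

/-- If `f₁(0) ≠ f₂(∞)` then the translation parts of affine reparametrizations carrying a map
near `f₁` to a map near `f₂` are bounded. -/
theorem near_reparametrization_translations_bounded {M : Type*} [MetricSpace M] [CompactSpace M]
    (f₁ f₂ : C(OnePoint ℂ, M)) (hf : f₁ (((0 : ℂ) : OnePoint ℂ)) ≠ f₂ ∞) :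
    ∃ ε₁ > 0, ∃ ε₂ > 0, ∃ R > 0,
      ∀ (h : C(OnePoint ℂ, M)) (a c : ℂ) (ha : a ≠ 0),
        dist h f₁ ≤ ε₁ → dist (h.comp (gAff a c ha)) f₂ ≤ ε₂ → ‖c‖ ≤ R :=
  near_reparametrization_translations_bounded_general f₁ f₂ hf
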